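/- Let N ≥ 2, let κ₁,…,κ_N be strictly positive reals, κ' = diag(κ₁,…,κ_{N−1}), κ'' = κ_N, κ = diag(κ',κ''). Let Q₀ = (q⁰₁,…,q⁰_{N−1}) be a real row vector (a 1×(N−1) matrix) and Q(r) = e^{κ_N r} Q₀ e^{−κ'r}, with entries q_i(r) = q⁰_i e^{(κ_N − κ_i)r}. Define C = [[I,0],[Q₀,0]], D = [[0,−Q₀ᵀ],[0,1]] and σ(r) = κ^{−1/2}(e^{κr}C + e^{−κr}D). Then for every r, σ(r) is invertible and the superpotential satisfies U(r) = σ'(r)σ(r)⁻¹ = κ − (2/(1 + Q(r)Q(r)ᵀ)) κ^{1/2} [[QᵀQ, −Qᵀ],[−Q, 1]] κ^{1/2}, where QᵀQ is the (N−1)×(N−1) matrix with entries q_i q_j and QQᵀ = Σ q_i² is a scalar. -/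

import Mathlib

open Matrix

/-!
Write `Q = Q(r)` and `Δ = diag(e^{κ'r}, e^{-κ_N r})`. Conjugating the constant blocks by the
exponentials gives `e^{κr}C = [[1,0],[Q,0]] Δ` and `e^{-κr}D = H Δ` with `H = [[0,-Qᵀ],[0,1]]`,
so `σ = κ^{-1/2} G Δ` and `σ' = κ^{1/2} (G - 2H) Δ` for `G = [[1,-Qᵀ],[Q,1]]`.
Since `det G = 1 + QQᵀ > 0` and `[[QᵀQ,-Qᵀ],[-Q,1]] G = (1 + QQᵀ) H`, this yields
`σ'σ⁻¹ = κ - 2 κ^{1/2} H G⁻¹ κ^{1/2}` with `H G⁻¹ = (1 + QQᵀ)⁻¹ [[QᵀQ,-Qᵀ],[-Q,1]]`.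
-/

section BlockConjugation

variable {m n R : Type*} [Fintype m] [Fintype n] [DecidableEq m] [DecidableEq n] [CommRing R]

theorem diagonal_sumElim_mul_fromBlocks_one_zero (u u' : n → R) (v v' : m → R)
    (hu : ∀ i, u' i * u i = 1) (Q₀ : Matrix m n R) :
    diagonal (Sum.elim u v) * fromBlocks 1 0 Q₀ 0 =
      fromBlocks 1 0 (diagonal v * Q₀ * diagonal u') 0 * diagonal (Sum.elim u v') := by
  simp [← fromBlocks_diagonal, fromBlocks_multiply, Matrix.mul_assoc, hu]

theorem diagonal_sumElim_mul_fromBlocks_zero_one (u u' : n → R) (v v' : m → R)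
    (hv : ∀ i, v i * v' i = 1) (Q₀ : Matrix m n R) :
    diagonal (Sum.elim u' v') * fromBlocks 0 (-Q₀ᵀ) 0 1 =
      fromBlocks 0 (-(diagonal v * Q₀ * diagonal u')ᵀ) 0 1 * diagonal (Sum.elim u v') := by
  simp [← fromBlocks_diagonal, fromBlocks_multiply, Matrix.mul_assoc, hv]

end BlockConjugation

section ExpConjugation

open Real

variable {m n : Type*} [Fintype m] [Fintype n] [DecidableEq m] [DecidableEq n]
  (κ' : n → ℝ) (κ'' : m → ℝ) (Q₀ : Matrix m n ℝ) (r : ℝ)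

theorem diagonal_exp_mul_fromBlocks_one_zero :
    diagonal (fun i => exp (Sum.elim κ' κ'' i * r)) * fromBlocks 1 0 Q₀ 0 =
      fromBlocks 1 0
          (diagonal (fun i => exp (κ'' i * r)) * Q₀ * diagonal (fun i => exp (-(κ' i) * r))) 0 *
        diagonal (Sum.elim (fun i => exp (κ' i * r)) fun i => exp (-(κ'' i) * r)) := by
  have hsplit : (fun i => exp (Sum.elim κ' κ'' i * r)) =
      Sum.elim (fun i => exp (κ' i * r)) fun i => exp (κ'' i * r) := by
    ext (i | i) <;> rfl
  rw [hsplit]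
  exact diagonal_sumElim_mul_fromBlocks_one_zero _ _ _ _
    (fun i => by rw [← exp_add, neg_mul, neg_add_cancel, exp_zero]) Q₀

theorem diagonal_exp_mul_fromBlocks_zero_one :
    diagonal (fun i => exp (-(Sum.elim κ' κ'' i) * r)) * fromBlocks 0 (-Q₀ᵀ) 0 1 =
      fromBlocks 0
          (-(diagonal (fun i => exp (κ'' i * r)) * Q₀ *
            diagonal (fun i => exp (-(κ' i) * r)))ᵀ) 0 1 *
        diagonal (Sum.elim (fun i => exp (κ' i * r)) fun i => exp (-(κ'' i) * r)) := by
  have hsplit : (fun i => exp (-(Sum.elim κ' κ'' i) * r)) =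
      Sum.elim (fun i => exp (-(κ' i) * r)) fun i => exp (-(κ'' i) * r) := by
    ext (i | i) <;> rfl
  rw [hsplit]
  exact diagonal_sumElim_mul_fromBlocks_zero_one _ _ _ _
    (fun i => by rw [← exp_add, neg_mul, add_neg_cancel, exp_zero]) Q₀

end ExpConjugation

section Row

variable {n R : Type*} [Fintype n] [DecidableEq n] [CommRing R]

theorem Matrix.fin_one_eq_smul_one (A : Matrix (Fin 1) (Fin 1) R) : A = A 0 0 • 1 := by
  ext i j; fin_cases i; fin_cases j; simp

theorem det_fromBlocks_one_neg_transpose (Q : Matrix (Fin 1) n R) :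
    (fromBlocks 1 (-Qᵀ) Q 1).det = 1 + (Q * Qᵀ) 0 0 := by
  rw [det_fromBlocks_one₁₁, det_fin_one, Matrix.mul_neg, sub_neg_eq_add, Matrix.add_apply,
    one_apply_eq]

theorem fromBlocks_mul_fromBlocks_one_neg_transpose (Q : Matrix (Fin 1) n R) :
    fromBlocks (Qᵀ * Q) (-Qᵀ) (-Q) 1 * fromBlocks 1 (-Qᵀ) Q 1 =
      (1 + (Q * Qᵀ) 0 0) • fromBlocks 0 (-Qᵀ) 0 1 := by
  set s := (Q * Qᵀ) 0 0
  have hs : Q * Qᵀ = s • 1 := (Q * Qᵀ).fin_one_eq_smul_one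
  have hQQ : Qᵀ * Q * Qᵀ = s • Qᵀ := by rw [Matrix.mul_assoc, hs, Matrix.mul_smul, Matrix.mul_one]
  rw [fromBlocks_multiply, fromBlocks_smul]
  congr 1 <;> simp only [Matrix.mul_neg, Matrix.neg_mul, neg_neg, Matrix.mul_one, Matrix.one_mul,
    hQQ, hs, smul_zero] <;> module

end Row

theorem one_add_mul_transpose_self_pos {n : Type*} [Fintype n] (Q : Matrix (Fin 1) n ℝ) :
    0 < 1 + (Q * Qᵀ) 0 0 := by
  have hsum : 0 ≤ (Q * Qᵀ) 0 0 := Finset.sum_nonneg fun k _ => mul_self_nonneg (Q 0 k)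
  linarith

theorem isUnit_fromBlocks_one_neg_transpose {n : Type*} [Fintype n] [DecidableEq n]
    (Q : Matrix (Fin 1) n ℝ) : IsUnit (fromBlocks 1 (-Qᵀ) Q 1) := by
  rw [isUnit_iff_isUnit_det, det_fromBlocks_one_neg_transpose]
  exact (one_add_mul_transpose_self_pos Q).ne'.isUnit

section SqrtDiagonal

variable {ι : Type*} [Fintype ι] [DecidableEq ι]

theorem diagonal_sqrt_mul_diagonal_inv_sqrt {κ : ι → ℝ} (hκ : ∀ i, 0 < κ i) :
    diagonal (fun i => √(κ i)) * diagonal (fun i => (√(κ i))⁻¹) = 1 := by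
  rw [diagonal_mul_diagonal, ← diagonal_one]
  exact congrArg diagonal (funext fun i => mul_inv_cancel₀ (Real.sqrt_pos.mpr (hκ i)).ne')

theorem diagonal_mul_diagonal_inv_sqrt (κ : ι → ℝ) :
    diagonal κ * diagonal (fun i => (√(κ i))⁻¹) = diagonal fun i => √(κ i) := by
  rw [diagonal_mul_diagonal]
  exact congrArg diagonal (funext fun i => by rw [← div_eq_mul_inv, Real.div_sqrt])

theorem isUnit_diagonal_inv_sqrt {κ : ι → ℝ} (hκ : ∀ i, 0 < κ i) :
    IsUnit (diagonal fun i => (√(κ i))⁻¹) :=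
  isUnit_diagonal.mpr <| Pi.isUnit_iff.mpr fun i =>
    (inv_pos.mpr (Real.sqrt_pos.mpr (hκ i))).ne'.isUnit

end SqrtDiagonal

theorem deriv_diagonal_mul_exp_add {ι ι' : Type*} [Fintype ι] [DecidableEq ι]
    (a k : ι → ℝ) (C D : Matrix ι ι' ℝ) (r : ℝ) :
    (of fun i j => deriv (fun t => (diagonal a * (diagonal (fun i => Real.exp (k i * t)) * C +
        diagonal (fun i => Real.exp (-(k i) * t)) * D)) i j) r) =
      diagonal (fun i => a i * k i) * (diagonal (fun i => Real.exp (k i * r)) * C -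
        diagonal (fun i => Real.exp (-(k i) * r)) * D) := by
  ext i j
  have hexp (c : ℝ) : HasDerivAt (fun t => Real.exp (c * t)) (c * Real.exp (c * r)) r := by
    simpa [mul_comm] using ((hasDerivAt_id r).const_mul c).exp
  have hentry : HasDerivAt
      (fun t => a i * (Real.exp (k i * t) * C i j + Real.exp (-(k i) * t) * D i j))
      (a i * (k i * Real.exp (k i * r) * C i j + -(k i) * Real.exp (-(k i) * r) * D i j)) r :=
    (((hexp (k i)).mul_const (C i j)).add ((hexp (-(k i))).mul_const (D i j))).const_mul (a i)
  simp only [of_apply, diagonal_mul, Matrix.add_apply, Matrix.sub_apply, hentry.deriv]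
  ring

/-- The superpotential `σ'σ⁻¹` for `σ = S' G Δ`, `σ' = S (G - 2H) Δ`, where `S = K^{1/2}` and
`S' = K^{-1/2}`. -/
theorem mul_nonsing_inv_eq_of_factorization {ι R : Type*} [Fintype ι] [DecidableEq ι] [Field R]
    {K S S' B G H Δ : Matrix ι ι R} {c : R} (hc : c ≠ 0) (hSS' : S * S' = 1) (hKS' : K * S' = S)
    (hBG : B * G = c • H) (hunit : IsUnit (S' * (G * Δ))) :
    S * ((G - (2 : R) • H) * Δ) * (S' * (G * Δ))⁻¹ = K - (2 / c) • (S * B * S) := by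
  suffices h : (K - (2 / c) • (S * B * S)) * (S' * (G * Δ)) = S * ((G - (2 : R) • H) * Δ) by
    rw [← h, Matrix.mul_assoc, mul_nonsing_inv _ ((isUnit_iff_isUnit_det _).mp hunit),
      Matrix.mul_one]
  calc (K - (2 / c) • (S * B * S)) * (S' * (G * Δ))
      = K * S' * (G * Δ) - (2 / c) • (S * B * (S * S') * G * Δ) := by
        simp only [Matrix.sub_mul, Matrix.smul_mul, Matrix.mul_assoc]
    _ = S * (G * Δ) - (2 / c) • (S * (B * G) * Δ) := by
        rw [hKS', hSS', Matrix.mul_one, Matrix.mul_assoc S B]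
    _ = S * ((G - (2 : R) • H) * Δ) := by
        rw [hBG, Matrix.mul_smul, Matrix.smul_mul, smul_smul, div_mul_cancel₀ _ hc]
        simp only [Matrix.sub_mul, Matrix.mul_sub, Matrix.smul_mul, Matrix.mul_smul,
          Matrix.mul_assoc]

open Real in
theorem cor2_row_superpotential_general
    (N : ℕ)
    (κ' : Fin (N - 1) → ℝ) (κN : ℝ)
    (hκ' : ∀ i, 0 < κ' i) (hκN : 0 < κN)
    (Q₀ : Matrix (Fin 1) (Fin (N - 1)) ℝ) :
    let κv : Fin (N - 1) ⊕ Fin 1 → ℝ := Sum.elim κ' fun _ => κN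
    let C : Matrix (Fin (N - 1) ⊕ Fin 1) (Fin (N - 1) ⊕ Fin 1) ℝ :=
      fromBlocks 1 0 Q₀ 0
    let D : Matrix (Fin (N - 1) ⊕ Fin 1) (Fin (N - 1) ⊕ Fin 1) ℝ :=
      fromBlocks 0 (-Q₀ᵀ) 0 1
    let σ : ℝ → Matrix (Fin (N - 1) ⊕ Fin 1) (Fin (N - 1) ⊕ Fin 1) ℝ := fun s =>
      diagonal (fun i => (Real.sqrt (κv i))⁻¹) *
        (diagonal (fun i => Real.exp (κv i * s)) * C +
          diagonal (fun i => Real.exp (-(κv i) * s)) * D)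
    let σd : ℝ → Matrix (Fin (N - 1) ⊕ Fin 1) (Fin (N - 1) ⊕ Fin 1) ℝ := fun s =>
      Matrix.of fun i j => deriv (fun t => σ t i j) s
    let Q : ℝ → Matrix (Fin 1) (Fin (N - 1)) ℝ := fun r =>
      diagonal (fun _ : Fin 1 => Real.exp (κN * r)) * Q₀ *
        diagonal (fun i => Real.exp (-(κ' i) * r))
    ∀ r : ℝ,
      IsUnit (σ r) ∧
      σd r * (σ r)⁻¹ =
        diagonal κv -
          (2 / (1 + (Q r * (Q r)ᵀ) 0 0)) •
            (diagonal (fun i => Real.sqrt (κv i)) *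
              fromBlocks ((Q r)ᵀ * Q r) (-(Q r)ᵀ) (-(Q r)) 1 *
              diagonal (fun i => Real.sqrt (κv i))) := by
  intro κv C D σ σd Q r
  have hκv : ∀ i, 0 < κv i := Sum.rec hκ' fun _ => hκN
  have hC := diagonal_exp_mul_fromBlocks_one_zero κ' (fun _ : Fin 1 => κN) Q₀ r
  have hD := diagonal_exp_mul_fromBlocks_zero_one κ' (fun _ : Fin 1 => κN) Q₀ r
  set Δ := diagonal (Sum.elim (fun i => exp (κ' i * r)) fun _ : Fin 1 => exp (-κN * r))
  set G : Matrix (Fin (N - 1) ⊕ Fin 1) (Fin (N - 1) ⊕ Fin 1) ℝ := fromBlocks 1 (-(Q r)ᵀ) (Q r) 1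
  set H : Matrix (Fin (N - 1) ⊕ Fin 1) (Fin (N - 1) ⊕ Fin 1) ℝ := fromBlocks 0 (-(Q r)ᵀ) 0 1
  have hG : fromBlocks 1 0 (Q r) 0 + H = G := by simp [H, G, fromBlocks_add]
  have hσ : σ r = diagonal (fun i => (√(κv i))⁻¹) * (G * Δ) := by
    show _ * (_ + _) = _
    rw [hC, hD, ← Matrix.add_mul, hG]
  have hσd : σd r = diagonal (fun i => √(κv i)) * ((G - (2 : ℝ) • H) * Δ) := by
    rw [show σd r = _ from deriv_diagonal_mul_exp_add (fun i => (√(κv i))⁻¹) κv C D r, hC, hD,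
      ← Matrix.sub_mul, ← hG]
    have hdiag : (fun i => (√(κv i))⁻¹ * κv i) = fun i => √(κv i) :=
      funext fun i => by rw [inv_mul_eq_div, div_sqrt]
    rw [hdiag]
    congr 2
    module
  have hΔ : IsUnit Δ := isUnit_diagonal.mpr <| Pi.isUnit_iff.mpr <|
    Sum.rec (fun _ => (exp_pos _).ne'.isUnit) fun _ => (exp_pos _).ne'.isUnit
  have hunit : IsUnit (σ r) :=
    hσ ▸ (isUnit_diagonal_inv_sqrt hκv).mul ((isUnit_fromBlocks_one_neg_transpose (Q r)).mul hΔ)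
  refine ⟨hunit, ?_⟩
  rw [hσ] at hunit ⊢
  rw [hσd]
  exact mul_nonsing_inv_eq_of_factorization (one_add_mul_transpose_self_pos (Q r)).ne'
    (diagonal_sqrt_mul_diagonal_inv_sqrt hκv) (diagonal_mul_diagonal_inv_sqrt κv)
    (fromBlocks_mul_fromBlocks_one_neg_transpose (Q r)) hunit

/-- Paper's Corollary 2, first formula (59): the rank `C = N - 1` case with `X₀ = 0`,
where `Q(r) = e^{κ_N r}Q₀e^{-κ'r}` is a row. Then `σ(r)` is invertible for all `r` and
`U(r) = κ - (2/(1 + QQᵀ))κ^{1/2}[[QᵀQ, -Qᵀ],[-Q, 1]]κ^{1/2}`. -/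
theorem cor2_row_superpotential
    (N : ℕ) (hN : 2 ≤ N)
    (κ' : Fin (N - 1) → ℝ) (κN : ℝ)
    (hκ' : ∀ i, 0 < κ' i) (hκN : 0 < κN)
    (Q₀ : Matrix (Fin 1) (Fin (N - 1)) ℝ) :
    let κv : Fin (N - 1) ⊕ Fin 1 → ℝ := Sum.elim κ' fun _ => κN
    let C : Matrix (Fin (N - 1) ⊕ Fin 1) (Fin (N - 1) ⊕ Fin 1) ℝ :=
      fromBlocks 1 0 Q₀ 0
    let D : Matrix (Fin (N - 1) ⊕ Fin 1) (Fin (N - 1) ⊕ Fin 1) ℝ :=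
      fromBlocks 0 (-Q₀ᵀ) 0 1
    let σ : ℝ → Matrix (Fin (N - 1) ⊕ Fin 1) (Fin (N - 1) ⊕ Fin 1) ℝ := fun s =>
      diagonal (fun i => (Real.sqrt (κv i))⁻¹) *
        (diagonal (fun i => Real.exp (κv i * s)) * C +
          diagonal (fun i => Real.exp (-(κv i) * s)) * D)
    let σd : ℝ → Matrix (Fin (N - 1) ⊕ Fin 1) (Fin (N - 1) ⊕ Fin 1) ℝ := fun s =>
      Matrix.of fun i j => deriv (fun t => σ t i j) s
    let Q : ℝ → Matrix (Fin 1) (Fin (N - 1)) ℝ := fun r =>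
      diagonal (fun _ : Fin 1 => Real.exp (κN * r)) * Q₀ *
        diagonal (fun i => Real.exp (-(κ' i) * r))
    ∀ r : ℝ,
      IsUnit (σ r) ∧
      σd r * (σ r)⁻¹ =
        diagonal κv -
          (2 / (1 + (Q r * (Q r)ᵀ) 0 0)) •
            (diagonal (fun i => Real.sqrt (κv i)) *
              fromBlocks ((Q r)ᵀ * Q r) (-(Q r)ᵀ) (-(Q r)) 1 *
              diagonal (fun i => Real.sqrt (κv i))) :=
  cor2_row_superpotential_general N κ' κN hκ' hκN Q₀
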